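/- Let n_1, …, n_d be positive integers, n = n_1⋯n_d, V ∈ ℝⁿ, and let x_1 ∈ ℝ^{n_1}, …, x_{d−1} ∈ ℝ^{n_{d−1}} be fixed nonzero vectors. Then the function x_d ↦ ‖V − (x_1 ⊗ ⋯ ⊗ x_{d−1}) ⊗ x_d‖ over x_d ∈ ℝ^{n_d} attains its unique global minimum at x_d = (1/∏_{s=1}^{d−1}‖x_s‖²) · ((x_1 ⊗ ⋯ ⊗ x_{d−1})ᵀ ⊗ I_{n_d}) V. -/

import Mathlib

/-!
Write `K y = (x₁ ⊗ ⋯ ⊗ x_{d−1}) ⊗ y` and `c = ∏ₛ ‖x_s‖²`. Inner products of Kronecker products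
factor, so `K` is linear with `⟪K y, K z⟫ = c ⟪y, z⟫`, and its adjoint is
`lastProj = (x₁ ⊗ ⋯ ⊗ x_{d−1})ᵀ ⊗ I`. Hence `y₀ = c⁻¹ • lastProj V` solves the normal equation
`c • y₀ = Kᵀ V`, the residual `V − K y₀` is orthogonal to the range of `K`, and Pythagoras gives
`‖V − K y‖² = ‖V − K y₀‖² + c ‖y − y₀‖²`. As `c > 0`, the minimum at `y₀` is strict.
-/

/-- The `s`-th mixed-radix digit (0-indexed) of an index `k ∈ Fin (n₁⋯n_d)`. -/
def digitFin {d : ℕ} (n : Fin d → ℕ) (s : Fin d) (k : Fin (∏ t, n t)) : Fin (n s) :=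
  ⟨(k.val / ∏ t ∈ Finset.Ioi s, n t) % n s,
   Nat.mod_lt _ (Nat.pos_of_ne_zero fun h0 => by
     have hk : (0 : ℕ) < ∏ t, n t := Nat.lt_of_le_of_lt (Nat.zero_le _) k.isLt
     rw [Finset.prod_eq_zero (Finset.mem_univ s) h0] at hk
     exact Nat.lt_irrefl 0 hk)⟩

lemma digitFin_last_val {d : ℕ} (n : Fin (d + 1) → ℕ) (k : Fin (∏ t, n t)) :
    (digitFin n (Fin.last d) k).val = k.val % n (Fin.last d) := by
  simp [digitFin, Finset.Ioi_eq_empty.mpr fun t _ => Fin.le_last t]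

lemma Fin.prod_Ioi_castSucc {M : Type*} [CommMonoid M] {d : ℕ} (f : Fin (d + 1) → M)
    (s : Fin d) :
    ∏ t ∈ Finset.Ioi s.castSucc, f t = f (Fin.last d) * ∏ t ∈ Finset.Ioi s, f t.castSucc := by
  simp only [← Finset.filter_lt_eq_Ioi, Finset.prod_filter, Fin.prod_univ_castSucc,
    Fin.castSucc_lt_castSucc_iff, Fin.castSucc_lt_last, if_true, mul_comm]

lemma digitFin_castSucc {d : ℕ} (n : Fin (d + 1) → ℕ) (s : Fin d)
    (k : Fin (∏ t, n t)) (q : Fin (∏ t : Fin d, n t.castSucc))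
    (hq : q.val = k.val / n (Fin.last d)) :
    digitFin n s.castSucc k = digitFin (fun t => n t.castSucc) s q := by
  apply Fin.ext
  simp only [digitFin, hq, Fin.prod_Ioi_castSucc, Nat.div_div_eq_div_mul]

theorem sum_prod_digitFin {R : Type*} [CommSemiring R] {d : ℕ} (n : Fin d → ℕ)
    (f : ∀ t, Fin (n t) → R) :
    ∑ k : Fin (∏ t, n t), ∏ t, f t (digitFin n t k) = ∏ t, ∑ i, f t i := by
  induction d with
  | zero => simp
  | succ d ih =>
    let e : Fin (∏ t, n t) ≃ Fin (∏ t : Fin d, n t.castSucc) × Fin (n (Fin.last d)) :=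
      (finCongr (Fin.prod_univ_castSucc n)).trans finProdFinEquiv.symm
    have hsplit : ∀ k, ∏ t, f t (digitFin n t k) =
        (∏ s, f s.castSucc (digitFin (fun t => n t.castSucc) s (e k).1)) *
          f (Fin.last d) (e k).2 := by
      intro k
      rw [Fin.prod_univ_castSucc]
      congr 1
      · exact Finset.prod_congr rfl fun s _ => by rw [digitFin_castSucc n s k (e k).1 rfl]
      · exact congrArg _ (Fin.ext (digitFin_last_val n k))
    rw [Fintype.sum_congr _ _ hsplit, e.sum_comp (fun p => (∏ s, f s.castSucc
      (digitFin (fun t => n t.castSucc) s p.1)) * f (Fin.last d) p.2),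
      Fintype.sum_prod_type]
    dsimp only
    rw [← Finset.sum_mul_sum, ih, Fin.prod_univ_castSucc]

/-- The iterated Kronecker product `x₁ ⊗ x₂ ⊗ ⋯ ⊗ x_d` of column vectors
`x_s ∈ ℝ^{n_s}`, as a vector in `ℝ^{n₁⋯n_d}` (big-endian mixed-radix indexing). -/
noncomputable def bigKron {d : ℕ} (n : Fin d → ℕ)
    (x : ∀ s, EuclideanSpace ℝ (Fin (n s))) :
    EuclideanSpace ℝ (Fin (∏ t, n t)) :=
  WithLp.toLp 2 fun k => ∏ s, x s (digitFin n s k)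

/-- The matrix `(x₁ ⊗ ⋯ ⊗ x_{d−1})ᵀ ⊗ I_{n_d}` (an `n_d × (n₁⋯n_d)` matrix)
applied to `V ∈ ℝ^{n₁⋯n_d}`: its `j`-th entry is
`∑_{k : last digit of k = j} (∏_s (x_s)_{digit_s k}) · V_k`. -/
noncomputable def lastProj {d : ℕ} (n : Fin (d + 1) → ℕ)
    (x : ∀ s : Fin d, EuclideanSpace ℝ (Fin (n s.castSucc)))
    (V : EuclideanSpace ℝ (Fin (∏ t, n t))) :
    EuclideanSpace ℝ (Fin (n (Fin.last d))) :=
  WithLp.toLp 2 fun j => ∑ k : Fin (∏ t, n t),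
    (if digitFin n (Fin.last d) k = j
      then ∏ s : Fin d, x s (digitFin n s.castSucc k) else 0) * V k

open scoped RealInnerProductSpace

theorem inner_bigKron {d : ℕ} (n : Fin d → ℕ) (x y : ∀ s, EuclideanSpace ℝ (Fin (n s))) :
    ⟪bigKron n x, bigKron n y⟫ = ∏ s, ⟪x s, y s⟫ := by
  simp only [bigKron, PiLp.inner_apply, RCLike.inner_apply, conj_trivial,
    ← Finset.prod_mul_distrib]
  exact sum_prod_digitFin n fun s i => y s i * x s i

theorem bigKron_snoc_apply {d : ℕ} (n : Fin (d + 1) → ℕ)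
    (x : ∀ s : Fin d, EuclideanSpace ℝ (Fin (n s.castSucc)))
    (y : EuclideanSpace ℝ (Fin (n (Fin.last d)))) (k : Fin (∏ t, n t)) :
    bigKron n (Fin.snoc x y) k =
      (∏ s : Fin d, x s (digitFin n s.castSucc k)) * y (digitFin n (Fin.last d) k) := by
  simp [bigKron, Fin.prod_univ_castSucc]

theorem bigKron_snoc_sub {d : ℕ} (n : Fin (d + 1) → ℕ)
    (x : ∀ s : Fin d, EuclideanSpace ℝ (Fin (n s.castSucc)))
    (y z : EuclideanSpace ℝ (Fin (n (Fin.last d)))) :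
    bigKron n (Fin.snoc x y) - bigKron n (Fin.snoc x z) = bigKron n (Fin.snoc x (y - z)) := by
  ext k
  simp only [PiLp.sub_apply, bigKron_snoc_apply, mul_sub]

theorem inner_bigKron_snoc {d : ℕ} (n : Fin (d + 1) → ℕ)
    (x : ∀ s : Fin d, EuclideanSpace ℝ (Fin (n s.castSucc)))
    (y z : EuclideanSpace ℝ (Fin (n (Fin.last d)))) :
    ⟪bigKron n (Fin.snoc x y), bigKron n (Fin.snoc x z)⟫ = (∏ s, ‖x s‖ ^ 2) * ⟪y, z⟫ := by
  simp [inner_bigKron, Fin.prod_univ_castSucc]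

theorem inner_bigKron_snoc_eq_inner_lastProj {d : ℕ} (n : Fin (d + 1) → ℕ)
    (x : ∀ s : Fin d, EuclideanSpace ℝ (Fin (n s.castSucc)))
    (V : EuclideanSpace ℝ (Fin (∏ t, n t))) (y : EuclideanSpace ℝ (Fin (n (Fin.last d)))) :
    ⟪V, bigKron n (Fin.snoc x y)⟫ = ⟪lastProj n x V, y⟫ := by
  simp only [PiLp.inner_apply, RCLike.inner_apply, conj_trivial, bigKron_snoc_apply, lastProj,
    Finset.mul_sum]
  rw [Finset.sum_comm]
  refine Finset.sum_congr rfl fun k _ => ?_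
  simp only [ite_mul, zero_mul, mul_ite, mul_zero, Finset.sum_ite_eq, Finset.mem_univ, if_true]
  ring

theorem norm_sub_bigKron_snoc_sq {d : ℕ} (n : Fin (d + 1) → ℕ)
    (x : ∀ s : Fin d, EuclideanSpace ℝ (Fin (n s.castSucc)))
    (V : EuclideanSpace ℝ (Fin (∏ t, n t))) {y₀ : EuclideanSpace ℝ (Fin (n (Fin.last d)))}
    (hy₀ : (∏ s, ‖x s‖ ^ 2) • y₀ = lastProj n x V) (y : EuclideanSpace ℝ (Fin (n (Fin.last d)))) :
    ‖V - bigKron n (Fin.snoc x y)‖ ^ 2 =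
      ‖V - bigKron n (Fin.snoc x y₀)‖ ^ 2 + (∏ s, ‖x s‖ ^ 2) * ‖y - y₀‖ ^ 2 := by
  have horth : ⟪V - bigKron n (Fin.snoc x y₀), bigKron n (Fin.snoc x (y - y₀))⟫ = 0 := by
    rw [inner_sub_left, inner_bigKron_snoc_eq_inner_lastProj, inner_bigKron_snoc, ← hy₀,
      real_inner_smul_left, sub_self]
  have hsplit : V - bigKron n (Fin.snoc x y) =
      (V - bigKron n (Fin.snoc x y₀)) - bigKron n (Fin.snoc x (y - y₀)) := by
    rw [← bigKron_snoc_sub]; abel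
  rw [hsplit, norm_sub_sq_real, horth, ← real_inner_self_eq_norm_sq (bigKron _ _),
    inner_bigKron_snoc, real_inner_self_eq_norm_sq]
  ring

theorem NKP_last_factor_general {d : ℕ} (n : Fin (d + 1) → ℕ)
    (x : ∀ s : Fin d, EuclideanSpace ℝ (Fin (n s.castSucc)))
    (hx : ∀ s, x s ≠ 0)
    (V : EuclideanSpace ℝ (Fin (∏ t, n t))) :
    ∀ y : EuclideanSpace ℝ (Fin (n (Fin.last d))),
      y ≠ (∏ s, ‖x s‖ ^ 2)⁻¹ • lastProj n x V →
      ‖V - bigKron n (Fin.snoc x ((∏ s, ‖x s‖ ^ 2)⁻¹ • lastProj n x V))‖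
        < ‖V - bigKron n (Fin.snoc x y)‖ := by
  intro y hy
  set c := ∏ s, ‖x s‖ ^ 2
  have hc : 0 < c := Finset.prod_pos fun s _ => pow_pos (norm_pos_iff.mpr (hx s)) 2
  have hgap : 0 < c * ‖y - c⁻¹ • lastProj n x V‖ ^ 2 :=
    mul_pos hc (pow_pos (norm_pos_iff.mpr (sub_ne_zero.mpr hy)) 2)
  refine lt_of_pow_lt_pow_left₀ 2 (norm_nonneg _) ?_
  rw [norm_sub_bigKron_snoc_sq n x V (smul_inv_smul₀ hc.ne' _) y]
  linarith

/-- For fixed nonzero `x₁,…,x_{d−1}`, the map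
`x_d ↦ ‖V − (x₁ ⊗ ⋯ ⊗ x_{d−1}) ⊗ x_d‖` attains its unique global minimum at
`x_d = (1/∏ₛ‖x_s‖²) · ((x₁ ⊗ ⋯ ⊗ x_{d−1})ᵀ ⊗ I_{n_d}) V`. -/
theorem NKP_last_factor {d : ℕ} (n : Fin (d + 1) → ℕ) (hn : ∀ s, 0 < n s)
    (x : ∀ s : Fin d, EuclideanSpace ℝ (Fin (n s.castSucc)))
    (hx : ∀ s, x s ≠ 0)
    (V : EuclideanSpace ℝ (Fin (∏ t, n t))) :
    ∀ y : EuclideanSpace ℝ (Fin (n (Fin.last d))),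
      y ≠ (∏ s, ‖x s‖ ^ 2)⁻¹ • lastProj n x V →
      ‖V - bigKron n (Fin.snoc x ((∏ s, ‖x s‖ ^ 2)⁻¹ • lastProj n x V))‖
        < ‖V - bigKron n (Fin.snoc x y)‖ :=
  NKP_last_factor_general n x hx V
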